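/- arXiv:2006.16814 — 2 statements merged into one kernel-verified Lean document; each statement's English description precedes it below -/
import Mathlib

section
/- Let A be an Arens regular Banach algebra such that every continuous derivation D : A** → A* is weak*-weak*-continuous. If A is weakly amenable, then H^1(A**, A*) = {0}. -/
/-!
Common definitions: duals, biduals, Arens products, module actions,
derivations, first cohomology-vanishing predicates, weak-star continuity.
-/

noncomputable section

open ContinuousLinearMap Filter Topology Function

namespace ArensPaper

variable (𝕜 : Type) [RCLike 𝕜]

/-- The (topological) dual of a normed space. -/
abbrev Du (X : Type) [NormedAddCommGroup X] [NormedSpace 𝕜 X] : Type :=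
  StrongDual 𝕜 X

/-- The bidual of a normed space. -/
abbrev Bi (X : Type) [NormedAddCommGroup X] [NormedSpace 𝕜 X] : Type :=
  Du 𝕜 (Du 𝕜 X)

/-- Canonical embedding of a normed space into its bidual. -/
abbrev inDu (X : Type) [NormedAddCommGroup X] [NormedSpace 𝕜 X] : X →L[𝕜] Bi 𝕜 X :=
  NormedSpace.inclusionInDoubleDual 𝕜 X

variable {X Y Z : Type} [NormedAddCommGroup X] [NormedSpace 𝕜 X]
  [NormedAddCommGroup Y] [NormedSpace 𝕜 Y] [NormedAddCommGroup Z] [NormedSpace 𝕜 Z]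

/-- The transpose (Banach-space adjoint) of a continuous linear map. -/
def tr (T : X →L[𝕜] Y) : Du 𝕜 Y →L[𝕜] Du 𝕜 X :=
  (compL 𝕜 X Y 𝕜).flip T

/-- The second transpose of a continuous linear map. -/
def bitr (T : X →L[𝕜] Y) : Bi 𝕜 X →L[𝕜] Bi 𝕜 Y :=
  tr 𝕜 (tr 𝕜 T)

/-- The adjoint of a continuous bilinear map `m : X × Y → Z`:
`⟨adj m z' x, y⟩ = ⟨z', m x y⟩`. -/
def adj (m : X →L[𝕜] Y →L[𝕜] Z) : Du 𝕜 Z →L[𝕜] X →L[𝕜] Du 𝕜 Y :=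
  ((compL 𝕜 X (Y →L[𝕜] Z) (Du 𝕜 Y)).flip m).comp (compL 𝕜 Y Z 𝕜)

/-- The first Arens (triple adjoint) extension of a continuous bilinear map
to the biduals: `⟨ar1 m F G, z'⟩ = ⟨F, fun x => ⟨G, fun y => ⟨z', m x y⟩⟩⟩`. -/
def ar1 (m : X →L[𝕜] Y →L[𝕜] Z) : Bi 𝕜 X →L[𝕜] Bi 𝕜 Y →L[𝕜] Bi 𝕜 Z :=
  adj 𝕜 (adj 𝕜 (adj 𝕜 m))

/-- The second Arens extension of a continuous bilinear map. -/
def ar2 (m : X →L[𝕜] Y →L[𝕜] Z) : Bi 𝕜 X →L[𝕜] Bi 𝕜 Y →L[𝕜] Bi 𝕜 Z :=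
  (ar1 𝕜 m.flip).flip

/-- A continuous bilinear map is Arens regular if its two Arens extensions agree. -/
def ArensRegularBil (m : X →L[𝕜] Y →L[𝕜] Z) : Prop :=
  ar1 𝕜 m = ar2 𝕜 m

/-- A map between dual spaces is weak*-weak*-continuous. -/
def WStarCont (f : Du 𝕜 X → Du 𝕜 Y) : Prop :=
  Continuous fun x : WeakDual 𝕜 X => (show WeakDual 𝕜 Y from f (show Du 𝕜 X from x))

/-- A map from a dual space to a normed space is weak*-weak-continuous. -/
def WStarWeakCont {B : Type} [NormedAddCommGroup B] [NormedSpace 𝕜 B]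
    (f : Du 𝕜 X → B) : Prop :=
  Continuous fun x : WeakDual 𝕜 X => (show WeakSpace 𝕜 B from f (show Du 𝕜 X from x))

/-- `D` is a derivation with respect to a product `p` on `C` and module actions
`l`, `r` of `C` on `E`. -/
def IsDer {C E : Type} [NormedAddCommGroup C] [NormedSpace 𝕜 C]
    [NormedAddCommGroup E] [NormedSpace 𝕜 E]
    (p : C → C → C) (l : C → E → E) (r : E → C → E) (D : C →L[𝕜] E) : Prop :=
  ∀ a b : C, D (p a b) = l a (D b) + r (D a) b

/-- `D` is an inner derivation for the module actions `l`, `r`. -/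
def IsInner {C E : Type} [NormedAddCommGroup C] [NormedSpace 𝕜 C]
    [NormedAddCommGroup E] [NormedSpace 𝕜 E]
    (l : C → E → E) (r : E → C → E) (D : C →L[𝕜] E) : Prop :=
  ∃ x : E, ∀ a : C, D a = l a x - r x a

/-- A Banach algebra has a left bounded approximate identity. -/
def HasLBAI (A : Type) [NonUnitalNormedRing A] : Prop :=
  ∃ (ι : Type) (L : Filter ι) (e : ι → A), L.NeBot ∧ (∃ c : ℝ, ∀ i, ‖e i‖ ≤ c) ∧
    ∀ a : A, Tendsto (fun i => e i * a) L (𝓝 a)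

/-- A Banach bimodule structure on `E` over the "Banach algebra" `(C, p)`. -/
structure BimodStr {C : Type} [NormedAddCommGroup C] [NormedSpace 𝕜 C]
    (p : C →L[𝕜] C →L[𝕜] C) (E : Type) [NormedAddCommGroup E] [NormedSpace 𝕜 E] :
    Type where
  l : C →L[𝕜] E →L[𝕜] E
  r : E →L[𝕜] C →L[𝕜] E
  l_mul : ∀ a b x, l (p a b) x = l a (l b x)
  r_mul : ∀ x a b, r (r x a) b = r x (p a b)
  lr : ∀ a x b, r (l a x) b = l a (r x b)

/-- A bundled Banach bimodule over the "Banach algebra" `(C, p)`. -/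
structure BBimod {C : Type} [NormedAddCommGroup C] [NormedSpace 𝕜 C]
    (p : C →L[𝕜] C →L[𝕜] C) : Type 1 where
  E : Type
  [grp : NormedAddCommGroup E]
  [mod : NormedSpace 𝕜 E]
  [cpl : CompleteSpace E]
  str : BimodStr 𝕜 p E

attribute [instance] BBimod.grp BBimod.mod BBimod.cpl

/-- Amenability of the "Banach algebra" `(C, p)`: every continuous derivation into the
dual of any Banach bimodule is inner. -/
def IsAmenableP {C : Type} [NormedAddCommGroup C] [NormedSpace 𝕜 C]
    (p : C →L[𝕜] C →L[𝕜] C) : Prop :=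
  ∀ (M : BBimod 𝕜 p) (D : C →L[𝕜] Du 𝕜 M.E),
    IsDer 𝕜 (fun a b => p a b)
      (fun a f => f.comp (M.str.r.flip a)) (fun f a => f.comp (M.str.l a)) D →
    IsInner 𝕜 (fun a f => f.comp (M.str.r.flip a)) (fun f a => f.comp (M.str.l a)) D

/-- Weak amenability of a Banach algebra: every continuous derivation into the dual
(with the dual actions of the regular bimodule) is inner. -/
def WeaklyAmenable (A : Type) [NonUnitalNormedRing A] [NormedSpace 𝕜 A]
    [IsScalarTower 𝕜 A A] [SMulCommClass 𝕜 A A] : Prop :=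
  ∀ D : A →L[𝕜] Du 𝕜 A,
    IsDer 𝕜 (fun a b => a * b)
      (fun a f => f.comp ((ContinuousLinearMap.mul 𝕜 A).flip a))
      (fun f a => f.comp (ContinuousLinearMap.mul 𝕜 A a)) D →
    IsInner 𝕜 (fun a f => f.comp ((ContinuousLinearMap.mul 𝕜 A).flip a))
      (fun f a => f.comp (ContinuousLinearMap.mul 𝕜 A a)) D

/-- The embedding of the predual `X` into the dual `A*`, given an identification
`j : A ≃ X*`. -/
def predualEmbed {A X : Type} [NormedAddCommGroup A] [NormedSpace 𝕜 A]
    [NormedAddCommGroup X] [NormedSpace 𝕜 X] (j : A ≃ₗᵢ[𝕜] Du 𝕜 X) (x : X) : Du 𝕜 A :=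
  (inDu 𝕜 X x).comp j.toLinearIsometry.toContinuousLinearMap

/-- `j : A ≃ X*` makes `A` a dual Banach algebra: the image of `X` in `A*` is a
submodule of `A*` for the dual actions. -/
def IsDualBanachAlgebra {A X : Type} [NonUnitalNormedRing A] [NormedSpace 𝕜 A]
    [IsScalarTower 𝕜 A A] [SMulCommClass 𝕜 A A]
    [NormedAddCommGroup X] [NormedSpace 𝕜 X] (j : A ≃ₗᵢ[𝕜] Du 𝕜 X) : Prop :=
  ∀ (a : A) (x : X),
    ((predualEmbed 𝕜 j x).comp ((ContinuousLinearMap.mul 𝕜 A).flip a)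
        ∈ Set.range (predualEmbed 𝕜 j)) ∧
    ((predualEmbed 𝕜 j x).comp (ContinuousLinearMap.mul 𝕜 A a)
        ∈ Set.range (predualEmbed 𝕜 j))

/-- A normed space is weakly sequentially complete. -/
def WSCSpace (E : Type) [NormedAddCommGroup E] [NormedSpace 𝕜 E] : Prop :=
  ∀ f : ℕ → E,
    (∀ φ : Du 𝕜 E, ∃ L : 𝕜, Tendsto (fun n => φ (f n)) atTop (𝓝 L)) →
    ∃ e : E, ∀ φ : Du 𝕜 E, Tendsto (fun n => φ (f n)) atTop (𝓝 (φ e))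

/-- Left multiplication by `a ∈ A` restricted to an ideal `I`. -/
def mulLRes {A : Type} [NonUnitalNormedRing A] [NormedSpace 𝕜 A]
    [IsScalarTower 𝕜 A A] [SMulCommClass 𝕜 A A] (I : Submodule 𝕜 A) (a : A)
    (h : ∀ x : I, a * (x : A) ∈ I) : I →L[𝕜] I :=
  ((ContinuousLinearMap.mul 𝕜 A a).comp I.subtypeL).codRestrict I h

/-- Right multiplication by `a ∈ A` restricted to an ideal `I`. -/
def mulRRes {A : Type} [NonUnitalNormedRing A] [NormedSpace 𝕜 A]
    [IsScalarTower 𝕜 A A] [SMulCommClass 𝕜 A A] (I : Submodule 𝕜 A) (a : A)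
    (h : ∀ x : I, (x : A) * a ∈ I) : I →L[𝕜] I :=
  (((ContinuousLinearMap.mul 𝕜 A).flip a).comp I.subtypeL).codRestrict I h


/-- Connes-amenability of the bidual algebra `(A**, p)`: every weak*-weak*-continuous
derivation into a normal dual Banach bimodule is inner. -/
def ConnesAmenableBidual {A : Type} [NonUnitalNormedRing A] [NormedSpace 𝕜 A]
    [IsScalarTower 𝕜 A A] [SMulCommClass 𝕜 A A]
    (p : Bi 𝕜 A →L[𝕜] Bi 𝕜 A →L[𝕜] Bi 𝕜 A) : Prop :=
  ∀ (X : Type) [NormedAddCommGroup X] [NormedSpace 𝕜 X] [CompleteSpace X]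
    (M : BimodStr 𝕜 p (Du 𝕜 X)),
    (∀ f : Du 𝕜 X, WStarCont 𝕜 (fun m : Bi 𝕜 A => M.l m f) ∧
        WStarCont 𝕜 (fun m : Bi 𝕜 A => M.r f m)) →
    ∀ D : Bi 𝕜 A →L[𝕜] Du 𝕜 X,
      IsDer 𝕜 (fun m n => p m n) (fun m f => M.l m f) (fun f m => M.r f m) D →
      WStarCont 𝕜 (fun m => D m) →
      IsInner 𝕜 (fun m f => M.l m f) (fun f m => M.r f m) D

/-!
Weak amenability gives `f ∈ A*` such that `D` restricted to `A` is the inner derivation of `f`.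
Its canonical extension `m ↦ m·f − f·m` to `A**` is a weak*-continuous map into `A*`, and by
Arens regularity it is the inner derivation of `A**` implemented by `f`. Two weak*-continuous maps
that agree on the weak*-dense image of `A` in `A**` coincide, so `D` is this inner derivation.
-/

section Bidual

theorem exists_apply_eq_bidual_apply (m : Bi 𝕜 X) (s : Finset (Du 𝕜 X)) :
    ∃ x : X, ∀ g ∈ s, g x = m g := by
  classical
  let T : X →ₗ[𝕜] s → 𝕜 := LinearMap.pi fun g => ((g : Du 𝕜 X) : X →ₗ[𝕜] 𝕜)
  suffices (fun g : s => m g) ∈ LinearMap.range T by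
    obtain ⟨x, hx⟩ := this
    exact ⟨x, fun g hg => congrFun hx ⟨g, hg⟩⟩
  rw [← Subspace.forall_mem_dualAnnihilator_apply_eq_zero_iff]
  intro φ hφ
  -- `φ` pulled back along `T` is the functional `G`, which therefore vanishes
  let G : Du 𝕜 X := ∑ g : s, φ (fun h => if g = h then 1 else 0) • (g : Du 𝕜 X)
  have hG : G = 0 := by
    ext x
    have hx : φ (T x) = 0 := (Submodule.mem_dualAnnihilator _).1 hφ _ ⟨x, rfl⟩
    rw [LinearMap.pi_apply_eq_sum_univ] at hx
    simp only [G, T, FunLike.coe_sum, Finset.sum_apply, FunLike.coe_smul, Pi.smul_apply,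
      smul_eq_mul, zero_apply, LinearMap.pi_apply, ContinuousLinearMap.coe_coe] at hx ⊢
    simpa only [mul_comm] using hx
  calc φ (fun g : s => m g) = m G := by
        rw [LinearMap.pi_apply_eq_sum_univ φ, map_sum]
        simp only [map_smul, smul_eq_mul, mul_comm]
    _ = 0 := by rw [hG, map_zero]

theorem denseRange_inDu :
    DenseRange fun x : X => (show WeakDual 𝕜 (Du 𝕜 X) from inDu 𝕜 X x) := by
  intro m
  choose u hu using exists_apply_eq_bidual_apply 𝕜 (show Bi 𝕜 X from m)
  refine mem_closure_of_tendsto (b := atTop) ?_ (Eventually.of_forall fun s => ⟨u s, rfl⟩)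
  rw [tendsto_iff_forall_eval_tendsto_topDualPairing]
  intro g
  refine tendsto_const_nhds.congr' ?_
  filter_upwards [eventually_ge_atTop {g}] with s hs
  exact (hu s g (hs (Finset.mem_singleton_self g))).symm

theorem wStarCont_tr (T : X →L[𝕜] Y) : WStarCont 𝕜 (tr 𝕜 T) :=
  WeakDual.continuous_of_continuous_eval fun x => WeakDual.eval_continuous (T x)

theorem WStarCont.eq_of_eq_on_inDu {f g : Bi 𝕜 X → Du 𝕜 Y} (hf : WStarCont 𝕜 f)
    (hg : WStarCont 𝕜 g) (h : ∀ x, f (inDu 𝕜 X x) = g (inDu 𝕜 X x)) : f = g :=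
  (denseRange_inDu 𝕜).equalizer (γ := WeakDual 𝕜 Y) hf hg (funext h)

theorem ar1_inDu_inDu (p : X →L[𝕜] Y →L[𝕜] Z) (x : X) (y : Y) :
    ar1 𝕜 p (inDu 𝕜 X x) (inDu 𝕜 Y y) = inDu 𝕜 Z (p x y) :=
  rfl

end Bidual

section ArensRegular

variable {A : Type} [NonUnitalNormedRing A] [NormedSpace 𝕜 A]
  [IsScalarTower 𝕜 A A] [SMulCommClass 𝕜 A A]

theorem isDer_comp_inDu {D : Bi 𝕜 A →L[𝕜] Du 𝕜 A}
    (hD : IsDer 𝕜 (fun m n => ar1 𝕜 (mul 𝕜 A) m n)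
      (fun (m : Bi 𝕜 A) (F : Du 𝕜 (Bi 𝕜 A)) => F.comp ((ar1 𝕜 (mul 𝕜 A)).flip m))
      (fun (F : Du 𝕜 (Bi 𝕜 A)) (m : Bi 𝕜 A) => F.comp (ar1 𝕜 (mul 𝕜 A) m))
      ((inDu 𝕜 (Du 𝕜 A)).comp D)) :
    IsDer 𝕜 (fun a b : A => a * b)
      (fun a f => f.comp ((mul 𝕜 A).flip a))
      (fun f a => f.comp (mul 𝕜 A a)) (D.comp (inDu 𝕜 A)) := by
  intro a b
  ext c
  have h := congrArg (fun Φ : Bi 𝕜 (Du 𝕜 A) => Φ (inDu 𝕜 A c)) (hD (inDu 𝕜 A a) (inDu 𝕜 A b))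
  simpa [ar1_inDu_inDu] using h

/-- The map `m ↦ m·f − f·m` from `A**` to `A*`, the products being the Arens module actions. -/
def bidualInnerDer (f : Du 𝕜 A) : Bi 𝕜 A →L[𝕜] Du 𝕜 A :=
  tr 𝕜 (adj 𝕜 (mul 𝕜 A) f - adj 𝕜 (mul 𝕜 A).flip f)

theorem bidualInnerDer_inDu (f : Du 𝕜 A) (a : A) :
    bidualInnerDer 𝕜 f (inDu 𝕜 A a) = f.comp ((mul 𝕜 A).flip a) - f.comp (mul 𝕜 A a) :=
  rfl

theorem wStarCont_bidualInnerDer (f : Du 𝕜 A) : WStarCont 𝕜 (bidualInnerDer 𝕜 f) :=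
  wStarCont_tr 𝕜 _

theorem inDu_bidualInnerDer (hreg : ArensRegularBil 𝕜 (mul 𝕜 A)) (f : Du 𝕜 A) (m : Bi 𝕜 A) :
    inDu 𝕜 (Du 𝕜 A) (bidualInnerDer 𝕜 f m) =
      (inDu 𝕜 (Du 𝕜 A) f).comp ((ar1 𝕜 (mul 𝕜 A)).flip m) -
        (inDu 𝕜 (Du 𝕜 A) f).comp (ar1 𝕜 (mul 𝕜 A) m) := by
  ext F
  have hmF : ar1 𝕜 (mul 𝕜 A) m F = ar1 𝕜 (mul 𝕜 A).flip F m := by rw [hreg]; rfl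
  simp only [sub_apply, ContinuousLinearMap.comp_apply, ContinuousLinearMap.flip_apply, hmF]
  change F (m.comp (adj 𝕜 (mul 𝕜 A) f - adj 𝕜 (mul 𝕜 A).flip f)) = _
  rw [comp_sub, map_sub]
  rfl

end ArensRegular

theorem statement1_general {𝕜 : Type} [RCLike 𝕜] {A : Type}
    [NonUnitalNormedRing A] [NormedSpace 𝕜 A] [IsScalarTower 𝕜 A A]
    [SMulCommClass 𝕜 A A]
    -- `A` is Arens regular
    (hreg : ArensRegularBil 𝕜 (ContinuousLinearMap.mul 𝕜 A))
    -- every continuous derivation `D : A** → A*` is weak*-weak*-continuous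
    (hwc : ∀ D : Bi 𝕜 A →L[𝕜] Du 𝕜 A,
      IsDer 𝕜 (fun m n => ar1 𝕜 (ContinuousLinearMap.mul 𝕜 A) m n)
        (fun (m : Bi 𝕜 A) (F : Du 𝕜 (Bi 𝕜 A)) =>
          F.comp ((ar1 𝕜 (ContinuousLinearMap.mul 𝕜 A)).flip m))
        (fun (F : Du 𝕜 (Bi 𝕜 A)) (m : Bi 𝕜 A) =>
          F.comp (ar1 𝕜 (ContinuousLinearMap.mul 𝕜 A) m))
        ((inDu 𝕜 (Du 𝕜 A)).comp D) →
      WStarCont 𝕜 fun m => D m)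
    -- `A` is weakly amenable
    (hwa : WeaklyAmenable 𝕜 A) :
    -- `H^1(A**, A*) = {0}`
    ∀ D : Bi 𝕜 A →L[𝕜] Du 𝕜 A,
      IsDer 𝕜 (fun m n => ar1 𝕜 (ContinuousLinearMap.mul 𝕜 A) m n)
        (fun (m : Bi 𝕜 A) (F : Du 𝕜 (Bi 𝕜 A)) =>
          F.comp ((ar1 𝕜 (ContinuousLinearMap.mul 𝕜 A)).flip m))
        (fun (F : Du 𝕜 (Bi 𝕜 A)) (m : Bi 𝕜 A) =>
          F.comp (ar1 𝕜 (ContinuousLinearMap.mul 𝕜 A) m))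
        ((inDu 𝕜 (Du 𝕜 A)).comp D) →
      ∃ f : Du 𝕜 A, ∀ m : Bi 𝕜 A,
        inDu 𝕜 (Du 𝕜 A) (D m) =
          (inDu 𝕜 (Du 𝕜 A) f).comp ((ar1 𝕜 (ContinuousLinearMap.mul 𝕜 A)).flip m) -
            (inDu 𝕜 (Du 𝕜 A) f).comp (ar1 𝕜 (ContinuousLinearMap.mul 𝕜 A) m) := by
  intro D hD
  obtain ⟨f, hf⟩ := hwa _ (isDer_comp_inDu 𝕜 hD)
  have hDf : ⇑D = bidualInnerDer 𝕜 f :=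
    (hwc D hD).eq_of_eq_on_inDu 𝕜 (wStarCont_bidualInnerDer 𝕜 f) fun a =>
      (hf a).trans (bidualInnerDer_inDu 𝕜 f a).symm
  exact ⟨f, fun m => by rw [hDf, inDu_bidualInnerDer 𝕜 hreg]⟩

/-- Let `A` be an Arens regular Banach algebra such that every continuous derivation
`D : A** → A*` is weak*-weak*-continuous.  If `A` is weakly amenable, then
`H^1(A**, A*) = {0}`. -/
theorem statement1 {𝕜 : Type} [RCLike 𝕜] {A : Type}
    [NonUnitalNormedRing A] [NormedSpace 𝕜 A] [IsScalarTower 𝕜 A A]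
    [SMulCommClass 𝕜 A A] [CompleteSpace A]
    -- `A` is Arens regular
    (hreg : ArensRegularBil 𝕜 (ContinuousLinearMap.mul 𝕜 A))
    -- every continuous derivation `D : A** → A*` is weak*-weak*-continuous
    (hwc : ∀ D : Bi 𝕜 A →L[𝕜] Du 𝕜 A,
      IsDer 𝕜 (fun m n => ar1 𝕜 (ContinuousLinearMap.mul 𝕜 A) m n)
        (fun (m : Bi 𝕜 A) (F : Du 𝕜 (Bi 𝕜 A)) =>
          F.comp ((ar1 𝕜 (ContinuousLinearMap.mul 𝕜 A)).flip m))
        (fun (F : Du 𝕜 (Bi 𝕜 A)) (m : Bi 𝕜 A) =>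
          F.comp (ar1 𝕜 (ContinuousLinearMap.mul 𝕜 A) m))
        ((inDu 𝕜 (Du 𝕜 A)).comp D) →
      WStarCont 𝕜 fun m => D m)
    -- `A` is weakly amenable
    (hwa : WeaklyAmenable 𝕜 A) :
    -- `H^1(A**, A*) = {0}`
    ∀ D : Bi 𝕜 A →L[𝕜] Du 𝕜 A,
      IsDer 𝕜 (fun m n => ar1 𝕜 (ContinuousLinearMap.mul 𝕜 A) m n)
        (fun (m : Bi 𝕜 A) (F : Du 𝕜 (Bi 𝕜 A)) =>
          F.comp ((ar1 𝕜 (ContinuousLinearMap.mul 𝕜 A)).flip m))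
        (fun (F : Du 𝕜 (Bi 𝕜 A)) (m : Bi 𝕜 A) =>
          F.comp (ar1 𝕜 (ContinuousLinearMap.mul 𝕜 A) m))
        ((inDu 𝕜 (Du 𝕜 A)).comp D) →
      ∃ f : Du 𝕜 A, ∀ m : Bi 𝕜 A,
        inDu 𝕜 (Du 𝕜 A) (D m) =
          (inDu 𝕜 (Du 𝕜 A) f).comp ((ar1 𝕜 (ContinuousLinearMap.mul 𝕜 A)).flip m) -
            (inDu 𝕜 (Du 𝕜 A) f).comp (ar1 𝕜 (ContinuousLinearMap.mul 𝕜 A) m) :=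
  statement1_general hreg hwc hwa

end ArensPaper
end
end

section
/- Let A be a Banach algebra and n ≥ 0 an integer. If the 2n-th dual A^{(2n)} (a Banach algebra via the iterated first Arens products) is a two-sided ideal in A^{(2n+2)} and A^{(2n+1)} factors as a Banach A^{(2n)}-bimodule (A^{(2n+1)} = A^{(2n+1)}·A^{(2n)} = A^{(2n)}·A^{(2n+1)}), then A^{(2n)} is Arens regular. -/
/-!
Common definitions: duals, biduals, Arens products, module actions,
derivations, first cohomology-vanishing predicates, weak-star continuity.
-/

noncomputable section

open ContinuousLinearMap Filter Topology Function

namespace ArensPaper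

variable (𝕜 : Type) [RCLike 𝕜]

variable {X Y Z : Type} [NormedAddCommGroup X] [NormedSpace 𝕜 X]
  [NormedAddCommGroup Y] [NormedSpace 𝕜 Y] [NormedAddCommGroup Z] [NormedSpace 𝕜 Z]

/-- A bundled "Banach algebra": a normed space together with a continuous bilinear
multiplication. -/
structure BAlg (𝕜 : Type) [RCLike 𝕜] : Type 1 where
  X : Type
  [grp : NormedAddCommGroup X]
  [mod : NormedSpace 𝕜 X]
  p : X →L[𝕜] X →L[𝕜] X

attribute [instance] BAlg.grp BAlg.mod

/-- The bidual of a bundled Banach algebra, with the first Arens product. -/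
def BAlg.bidual {𝕜 : Type} [RCLike 𝕜] (C : BAlg 𝕜) : BAlg 𝕜 :=
  { X := Bi 𝕜 C.X, p := ar1 𝕜 C.p }

/-- The iterated even duals `A^{(2n)}` of a bundled Banach algebra, with the iterated
first Arens products. -/
def evenDual {𝕜 : Type} [RCLike 𝕜] (C : BAlg 𝕜) : ℕ → BAlg 𝕜
  | 0 => C
  | n + 1 => (evenDual C n).bidual

/-
Write `f·a := adj m f a` (so `(f·a)(b) = f(ab)`). If `a·F = c ∈ A` for `a ∈ A`, `F ∈ A**`, then
`F(f·a) = f(c)` for every `f ∈ A*`. For `f = g·a`, associativity gives `f·x = g·(ax)` and lets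
both Arens products be evaluated through this identity: `(F □ G)(g·a)` and `(F ◇ G)(g·a)` both
equal `G(g·c)`. Factorisation `A* = A*·A` says every functional has this form.
-/

section ArensRegular

variable {𝕜 : Type} [RCLike 𝕜]

lemma ar1_assoc {W : Type} [NormedAddCommGroup W] [NormedSpace 𝕜 W]
    (m : W →L[𝕜] W →L[𝕜] W) (hm : ∀ a b c, m (m a b) c = m a (m b c)) (F G H : Bi 𝕜 W) :
    ar1 𝕜 m (ar1 𝕜 m F G) H = ar1 𝕜 m F (ar1 𝕜 m G H) := by
  ext f
  exact congrArg F <| ContinuousLinearMap.ext fun x => congrArg G <|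
    ContinuousLinearMap.ext fun y => congrArg H <|
    ContinuousLinearMap.ext fun z => congrArg f (hm x y z)

lemma evenDual_assoc (C : BAlg 𝕜) (h : ∀ a b c, C.p (C.p a b) c = C.p a (C.p b c)) :
    ∀ n, ∀ a b c, (evenDual C n).p ((evenDual C n).p a b) c
      = (evenDual C n).p a ((evenDual C n).p b c)
  | 0 => h
  | n + 1 => ar1_assoc (evenDual C n).p (evenDual_assoc C h n)

lemma apply_adj_of_ar1_inDu_eq {X Y Z : Type} [NormedAddCommGroup X] [NormedSpace 𝕜 X]
    [NormedAddCommGroup Y] [NormedSpace 𝕜 Y] [NormedAddCommGroup Z] [NormedSpace 𝕜 Z]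
    {m : X →L[𝕜] Y →L[𝕜] Z} {a : X} {F : Bi 𝕜 Y} {c : Z}
    (h : ar1 𝕜 m (inDu 𝕜 X a) F = inDu 𝕜 Z c) (f : Du 𝕜 Z) :
    F (adj 𝕜 m f a) = f c :=
  congrArg (· f) h

variable {W : Type} [NormedAddCommGroup W] [NormedSpace 𝕜 W] {m : W →L[𝕜] W →L[𝕜] W}

lemma adj_adj_eq_adj_mul (hm : ∀ a b c, m (m a b) c = m a (m b c)) (g : Du 𝕜 W) (a x : W) :
    adj 𝕜 m (adj 𝕜 m g a) x = adj 𝕜 m g (m a x) :=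
  ContinuousLinearMap.ext fun y => congrArg g (hm a x y).symm

lemma ar1_apply_adj_of_ar1_inDu_eq (hm : ∀ a b c, m (m a b) c = m a (m b c))
    {a c : W} {F : Bi 𝕜 W} (hF : ar1 𝕜 m (inDu 𝕜 W a) F = inDu 𝕜 W c) (G : Bi 𝕜 W)
    (g : Du 𝕜 W) : ar1 𝕜 m F G (adj 𝕜 m g a) = G (adj 𝕜 m g c) := by
  have hGf : adj 𝕜 (adj 𝕜 m) G (adj 𝕜 m g a) = adj 𝕜 m (G.comp (adj 𝕜 m g)) a :=
    ContinuousLinearMap.ext fun x => congrArg G (adj_adj_eq_adj_mul hm g a x)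
  show F (adj 𝕜 (adj 𝕜 m) G (adj 𝕜 m g a)) = _
  rw [hGf, apply_adj_of_ar1_inDu_eq hF]
  rfl

lemma ar2_apply_adj_of_ar1_inDu_eq (hm : ∀ a b c, m (m a b) c = m a (m b c))
    {a c : W} {F : Bi 𝕜 W} (hF : ar1 𝕜 m (inDu 𝕜 W a) F = inDu 𝕜 W c) (G : Bi 𝕜 W)
    (g : Du 𝕜 W) : ar2 𝕜 m F G (adj 𝕜 m g a) = G (adj 𝕜 m g c) := by
  have hFf : adj 𝕜 (adj 𝕜 m.flip) F (adj 𝕜 m g a) = adj 𝕜 m g c := by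
    ext y
    have hy : adj 𝕜 m.flip (adj 𝕜 m g a) y = adj 𝕜 m (adj 𝕜 m.flip g y) a :=
      ContinuousLinearMap.ext fun x => congrArg g (hm a x y).symm
    show F (adj 𝕜 m.flip (adj 𝕜 m g a) y) = _
    rw [hy, apply_adj_of_ar1_inDu_eq hF]
    rfl
  exact congrArg G hFf

theorem arensRegularBil_of_mul_mem_range_inDu_of_factors
    (hm : ∀ a b c, m (m a b) c = m a (m b c))
    (hideal : ∀ (F : Bi 𝕜 W) (a : W), ar1 𝕜 m (inDu 𝕜 W a) F ∈ Set.range (inDu 𝕜 W))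
    (hfac : ∀ f : Du 𝕜 W, ∃ (g : Du 𝕜 W) (a : W), f = adj 𝕜 m g a) :
    ArensRegularBil 𝕜 m := by
  ext F G f
  obtain ⟨g, a, rfl⟩ := hfac f
  obtain ⟨c, hc⟩ := hideal F a
  rw [ar1_apply_adj_of_ar1_inDu_eq hm hc.symm, ar2_apply_adj_of_ar1_inDu_eq hm hc.symm]

end ArensRegular

theorem statement12_general {𝕜 : Type} [RCLike 𝕜] {A : Type}
    [NonUnitalNormedRing A] [NormedSpace 𝕜 A] [IsScalarTower 𝕜 A A]
    [SMulCommClass 𝕜 A A] (n : ℕ)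
    -- `C = A^{(2n)}`
    (C : BAlg 𝕜) (hC : C = evenDual { X := A, p := ContinuousLinearMap.mul 𝕜 A } n)
    -- `A^{(2n)}` is a two-sided ideal in `A^{(2n+2)}`
    (hideal : ∀ (m : Bi 𝕜 C.X) (a : C.X),
      ar1 𝕜 C.p m (inDu 𝕜 C.X a) ∈ Set.range (inDu 𝕜 C.X) ∧
      ar1 𝕜 C.p (inDu 𝕜 C.X a) m ∈ Set.range (inDu 𝕜 C.X))
    -- `A^{(2n+1)}` factors: `A^{(2n+1)} = A^{(2n+1)}·A^{(2n)} = A^{(2n)}·A^{(2n+1)}`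
    (hfac : ∀ f : Du 𝕜 C.X,
      (∃ (g : Du 𝕜 C.X) (a : C.X), f = g.comp (C.p a)) ∧
      (∃ (a : C.X) (g : Du 𝕜 C.X), f = g.comp (C.p.flip a))) :
    -- `A^{(2n)}` is Arens regular
    ArensRegularBil 𝕜 C.p := by
  have hassoc : ∀ a b c : C.X, C.p (C.p a b) c = C.p a (C.p b c) := by
    subst hC
    exact evenDual_assoc _ mul_assoc n
  exact arensRegularBil_of_mul_mem_range_inDu_of_factors hassoc
    (fun F a => (hideal F a).2) fun f => (hfac f).1

/-- Let `A` be a Banach algebra and `n ≥ 0`.  If `A^{(2n)}` (with the iterated first Arens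
product) is a two-sided ideal in `A^{(2n+2)}` and `A^{(2n+1)}` factors as a Banach
`A^{(2n)}`-bimodule, then `A^{(2n)}` is Arens regular. -/
theorem statement12 {𝕜 : Type} [RCLike 𝕜] {A : Type}
    [NonUnitalNormedRing A] [NormedSpace 𝕜 A] [IsScalarTower 𝕜 A A]
    [SMulCommClass 𝕜 A A] [CompleteSpace A] (n : ℕ)
    -- `C = A^{(2n)}`
    (C : BAlg 𝕜) (hC : C = evenDual { X := A, p := ContinuousLinearMap.mul 𝕜 A } n)
    -- `A^{(2n)}` is a two-sided ideal in `A^{(2n+2)}`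
    (hideal : ∀ (m : Bi 𝕜 C.X) (a : C.X),
      ar1 𝕜 C.p m (inDu 𝕜 C.X a) ∈ Set.range (inDu 𝕜 C.X) ∧
      ar1 𝕜 C.p (inDu 𝕜 C.X a) m ∈ Set.range (inDu 𝕜 C.X))
    -- `A^{(2n+1)}` factors: `A^{(2n+1)} = A^{(2n+1)}·A^{(2n)} = A^{(2n)}·A^{(2n+1)}`
    (hfac : ∀ f : Du 𝕜 C.X,
      (∃ (g : Du 𝕜 C.X) (a : C.X), f = g.comp (C.p a)) ∧
      (∃ (a : C.X) (g : Du 𝕜 C.X), f = g.comp (C.p.flip a))) :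
    -- `A^{(2n)}` is Arens regular
    ArensRegularBil 𝕜 C.p :=
  statement12_general n C hC hideal hfac

end ArensPaper
end
end
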